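/- arXiv:math/0512482 — 4 statements merged into one kernel-verified Lean document; each statement's English description precedes it below -/
import Mathlib

section
/- Let g be a holomorphic function on the open unit disk Δ with Re g(z) ≥ 0 for all z ∈ Δ, and let τ ∈ ∂Δ. If the non-tangential (angular) limit of g(z)/(1 - conj(τ)·z) as z → τ exists and equals 0, then g is identically 0 on Δ. -/
/-!
For `Re g ≥ 0` the Cayley transform `(g - g 0) / (g + conj (g 0))` maps the disk into the closed
disk and vanishes at `0` (shift `g` by `ε > 0` to keep the denominator away from zero, then let
`ε → 0`), so Schwarz's lemma gives `‖g z - g 0‖ ≤ ‖z‖ * ‖g z + conj (g 0)‖`. Its real part is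
Harnack's inequality `(1 - ‖z‖) Re g(0) ≤ (1 + ‖z‖) Re g(z)`, which along the radius `z = rτ`
bounds `Re g(0) / 2` by `‖g(rτ)‖ / (1 - r) → 0`. Once `Re g(0) = 0` we have `conj (g 0) = -g 0`
and the Schwarz bound collapses to `g ≡ g 0`; a constant `c` with `c / (1 - r) → 0` is `0`.
-/

open Complex Metric Filter Set Asymptotics Topology
open ComplexConjugate

/-- Stolz angle (non-tangential approach region) at a boundary point `τ`. -/
def StolzAt (τ : ℂ) (M : ℝ) : Set ℂ :=
  {z : ℂ | ‖τ - z‖ < M * (1 - ‖z‖)}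

/-- `f` has angular (non-tangential) limit `L` at `τ`: the limit through every
Stolz angle at `τ` is `L`. -/
def AngularTendsto (f : ℂ → ℂ) (τ L : ℂ) : Prop :=
  ∀ M : ℝ, 1 < M → Tendsto f (𝓝[StolzAt τ M] τ) (𝓝 L)

lemma norm_sub_le_norm_add_conj {w a : ℂ} (hw : 0 ≤ w.re) (ha : 0 ≤ a.re) :
    ‖w - a‖ ≤ ‖w + conj a‖ := by
  rw [← sq_le_sq₀ (norm_nonneg _) (norm_nonneg _), ← normSq_eq_norm_sq, ← normSq_eq_norm_sq]
  simp only [normSq_apply, sub_re, sub_im, add_re, add_im, conj_re, conj_im]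
  nlinarith [mul_nonneg hw ha]

lemma abs_re_sub_le_of_norm_sub_le {w a : ℂ} {r : ℝ} (hr₀ : 0 ≤ r) (hr₁ : r ≤ 1)
    (h : ‖w - a‖ ≤ r * ‖w + conj a‖) : |w.re - a.re| ≤ r * |w.re + a.re| := by
  rw [← abs_of_nonneg hr₀, ← abs_mul, ← sq_le_sq]
  have h2 := pow_le_pow_left₀ (norm_nonneg _) h 2
  rw [mul_pow, ← normSq_eq_norm_sq, ← normSq_eq_norm_sq] at h2
  simp only [normSq_apply, sub_re, sub_im, add_re, add_im, conj_re, conj_im] at h2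
  nlinarith [mul_nonneg (sub_nonneg.2 (pow_le_one₀ (n := 2) hr₀ hr₁)) (sq_nonneg (w.im - a.im))]

section UnitDisk

variable {g : ℂ → ℂ} {z : ℂ}

lemma norm_sub_le_mul_norm_add_conj_of_re_pos (hg : DifferentiableOn ℂ g (ball 0 1))
    (hre : ∀ w ∈ ball (0 : ℂ) 1, 0 ≤ (g w).re) (h₀ : 0 < (g 0).re) (hz : z ∈ ball (0 : ℂ) 1) :
    ‖g z - g 0‖ ≤ ‖z‖ * ‖g z + conj (g 0)‖ := by
  have hden : ∀ w ∈ ball (0 : ℂ) 1, g w + conj (g 0) ≠ 0 := fun w hw h ↦ by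
    have := congrArg re h
    simp only [add_re, conj_re, zero_re] at this
    linarith [hre w hw]
  set f : ℂ → ℂ := fun w ↦ (g w - g 0) / (g w + conj (g 0))
  have hf : DifferentiableOn ℂ f (ball 0 1) :=
    (hg.sub_const _).div (hg.add_const _) hden
  have hmaps : MapsTo f (ball 0 1) (closedBall 0 1) := fun w hw ↦ by
    rw [mem_closedBall_zero_iff, norm_div, div_le_one (norm_pos_iff.2 (hden w hw))]
    exact norm_sub_le_norm_add_conj (hre w hw) h₀.le
  have hschwarz := norm_le_norm_of_mapsTo_ball hf hmaps (by simp [f]) (mem_ball_zero_iff.1 hz)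
  rwa [norm_div, div_le_iff₀ (norm_pos_iff.2 (hden z hz))] at hschwarz

lemma norm_sub_le_mul_norm_add_conj (hg : DifferentiableOn ℂ g (ball 0 1))
    (hre : ∀ w ∈ ball (0 : ℂ) 1, 0 ≤ (g w).re) (hz : z ∈ ball (0 : ℂ) 1) :
    ‖g z - g 0‖ ≤ ‖z‖ * ‖g z + conj (g 0)‖ := by
  have hshift : ∀ ε : ℝ, 0 < ε → ‖g z - g 0‖ ≤ ‖z‖ * ‖g z + conj (g 0) + 2 * ε‖ := fun ε hε ↦ by
    have := norm_sub_le_mul_norm_add_conj_of_re_pos (g := fun w ↦ g w + ε) (hg.add_const _)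
      (fun w hw ↦ by simpa using add_nonneg (hre w hw) hε.le)
      (by simpa using add_pos_of_nonneg_of_pos (hre 0 (mem_ball_self one_pos)) hε) hz
    rw [add_sub_add_right_eq_sub, map_add, conj_ofReal] at this
    convert this using 3
    ring
  have hlim : Tendsto (fun ε : ℝ ↦ ‖z‖ * ‖g z + conj (g 0) + 2 * ε‖) (𝓝[>] 0)
      (𝓝 (‖z‖ * ‖g z + conj (g 0)‖)) := by
    refine tendsto_nhdsWithin_of_tendsto_nhds ?_
    simpa using (Continuous.tendsto (by fun_prop) 0 :
      Tendsto (fun ε : ℝ ↦ ‖z‖ * ‖g z + conj (g 0) + 2 * ε‖) _ _)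
  exact ge_of_tendsto hlim (eventually_nhdsWithin_of_forall hshift)

lemma harnack_lower_bound (hg : DifferentiableOn ℂ g (ball 0 1))
    (hre : ∀ w ∈ ball (0 : ℂ) 1, 0 ≤ (g w).re) (hz : z ∈ ball (0 : ℂ) 1) :
    (1 - ‖z‖) * (g 0).re ≤ (1 + ‖z‖) * (g z).re := by
  have h := abs_re_sub_le_of_norm_sub_le (norm_nonneg z) (mem_ball_zero_iff.1 hz).le
    (norm_sub_le_mul_norm_add_conj hg hre hz)
  rw [abs_of_nonneg (add_nonneg (hre z hz) (hre 0 (mem_ball_self one_pos)))] at h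
  linarith [neg_abs_le ((g z).re - (g 0).re)]

lemma eq_apply_zero_of_re_apply_zero (hg : DifferentiableOn ℂ g (ball 0 1))
    (hre : ∀ w ∈ ball (0 : ℂ) 1, 0 ≤ (g w).re) (h₀ : (g 0).re = 0) (hz : z ∈ ball (0 : ℂ) 1) :
    g z = g 0 := by
  have hconj : conj (g 0) = -g 0 := Complex.ext (by simp [h₀]) (by simp)
  have h := norm_sub_le_mul_norm_add_conj hg hre hz
  rw [hconj, ← sub_eq_add_neg] at h
  have hz₁ : ‖z‖ < 1 := mem_ball_zero_iff.1 hz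
  rw [← sub_eq_zero, ← norm_le_zero_iff]
  nlinarith [norm_nonneg (g z - g 0)]

end UnitDisk

lemma norm_ofReal_mul_of_norm_eq_one {τ : ℂ} (hτ : ‖τ‖ = 1) {r : ℝ} (hr : 0 ≤ r) :
    ‖(r : ℂ) * τ‖ = r := by
  rw [norm_mul, norm_real, Real.norm_eq_abs, hτ, mul_one, abs_of_nonneg hr]

lemma AngularTendsto.tendsto_radial {f : ℂ → ℂ} {τ L : ℂ} (hτ : ‖τ‖ = 1)
    (h : AngularTendsto f τ L) : Tendsto (fun r : ℝ ↦ f (r * τ)) (𝓝[<] 1) (𝓝 L) := by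
  have hstolz : ∀ r ∈ Ioo (0 : ℝ) 1, (r : ℂ) * τ ∈ StolzAt τ 2 := fun r hr ↦ by
    have hsub : τ - r * τ = ((1 - r : ℝ) : ℂ) * τ := by push_cast; ring
    simp only [StolzAt, mem_ofPred_eq, norm_ofReal_mul_of_norm_eq_one hτ hr.1.le, hsub,
      norm_ofReal_mul_of_norm_eq_one hτ (sub_pos.2 hr.2).le]
    linarith [hr.2]
  refine (h 2 one_lt_two).comp (tendsto_nhdsWithin_of_tendsto_nhds_of_eventually_within _ ?_ ?_)
  · simpa using ((by fun_prop : Continuous fun r : ℝ ↦ (r : ℂ) * τ).tendsto 1).mono_left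
      nhdsWithin_le_nhds
  · filter_upwards [Ioo_mem_nhdsLT one_pos] using hstolz

lemma tendsto_norm_div_one_sub_of_angularTendsto {g : ℂ → ℂ} {τ : ℂ} (hτ : ‖τ‖ = 1)
    (hlim : AngularTendsto (fun z ↦ g z / (1 - conj τ * z)) τ 0) :
    Tendsto (fun r : ℝ ↦ ‖g (r * τ)‖ / (1 - r)) (𝓝[<] 1) (𝓝 0) := by
  refine (norm_zero (E := ℂ) ▸ (hlim.tendsto_radial hτ).norm).congr' ?_
  filter_upwards [Ioo_mem_nhdsLT one_pos] with r hr
  rw [mul_left_comm, conj_mul', hτ, ofReal_one, one_pow, mul_one, norm_div, ← ofReal_one,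
    ← ofReal_sub, norm_real, Real.norm_eq_abs, abs_of_pos (sub_pos.2 hr.2)]

theorem rigidity_halfplane_angular_zero
    (g : ℂ → ℂ) (τ : ℂ) (hτ : ‖τ‖ = 1)
    (hg : DifferentiableOn ℂ g (ball (0:ℂ) 1))
    (hre : ∀ z ∈ ball (0:ℂ) 1, 0 ≤ (g z).re)
    (hlim : AngularTendsto (fun z => g z / (1 - (starRingEnd ℂ) τ * z)) τ 0) :
    ∀ z ∈ ball (0:ℂ) 1, g z = 0 := by
  have hmem : ∀ r ∈ Ioo (0 : ℝ) 1, (r : ℂ) * τ ∈ ball (0 : ℂ) 1 := fun r hr ↦ by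
    rw [mem_ball_zero_iff, norm_ofReal_mul_of_norm_eq_one hτ hr.1.le]
    exact hr.2
  have hle : ∀ c : ℝ, (∀ r ∈ Ioo (0 : ℝ) 1, c ≤ ‖g (r * τ)‖ / (1 - r)) → c ≤ 0 := fun c hc ↦
    ge_of_tendsto (tendsto_norm_div_one_sub_of_angularTendsto hτ hlim)
      (eventually_of_mem (Ioo_mem_nhdsLT one_pos) hc)
  have h₀ : (g 0).re = 0 := by
    refine le_antisymm ?_ (hre 0 (mem_ball_self one_pos))
    suffices (g 0).re / 2 ≤ 0 by linarith
    refine hle _ fun r hr ↦ ?_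
    have h := harnack_lower_bound hg hre (hmem r hr)
    rw [norm_ofReal_mul_of_norm_eq_one hτ hr.1.le] at h
    rw [le_div_iff₀ (sub_pos.2 hr.2)]
    nlinarith [re_le_norm (g (r * τ)), hre _ (hmem r hr), hr.2]
  have hconst : ∀ z ∈ ball (0 : ℂ) 1, g z = g 0 := fun z hz ↦
    eq_apply_zero_of_re_apply_zero hg hre h₀ hz
  have hg₀ : g 0 = 0 := norm_le_zero_iff.1 <| hle _ fun r hr ↦ by
    rw [hconst _ (hmem r hr)]
    exact le_div_self (norm_nonneg _) (sub_pos.2 hr.2) (by linarith [hr.1])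
  exact fun z hz ↦ (hconst z hz).trans hg₀
end

section
/- Let g be a holomorphic function on the open unit disk Δ with Re g(z) ≥ 0 for all z ∈ Δ, and let τ ∈ ∂Δ. If the angular limit k of g(z)/(1 - conj(τ)·z) as z → τ exists and is finite, then k is a nonnegative real number. -/
open Complex Metric Filter Set Asymptotics Topology

/-!
Along the segment `z = τ (1 - t w)`, `t ↓ 0`, with `Re w > 0`, the denominator `1 - τ̄ z`
equals `t w`, and the segment eventually lies in a Stolz angle at `τ`. Hence `g(z)/t → k w`,
and since `Re (g(z)/t) = Re g(z) / t ≥ 0`, we get `Re (k w) ≥ 0` for every `w` in the right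
half-plane. Taking `w = 1` and `w = 1 + i s` for suitable real `s` forces `k ∈ [0, ∞)`.
-/

theorem stolzAt_subset_ball {τ : ℂ} {M : ℝ} (hM : 0 < M) : StolzAt τ M ⊆ ball 0 1 := by
  intro z hz
  have : 0 < M * (1 - ‖z‖) := (norm_nonneg _).trans_lt hz
  simpa using (pos_of_mul_pos_right this hM.le)

theorem norm_one_sub_ofReal_mul_sq (t : ℝ) (w : ℂ) :
    ‖1 - t * w‖ ^ 2 = 1 - 2 * t * w.re + t ^ 2 * ‖w‖ ^ 2 := by
  simp only [Complex.sq_norm, Complex.normSq_apply, sub_re, sub_im, one_re, one_im, re_ofReal_mul,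
    im_ofReal_mul]
  ring

theorem mem_stolzAt_mul_one_sub_ofReal_mul {τ w : ℂ} (hτ : ‖τ‖ = 1) (hw : 0 < w.re) {t : ℝ}
    (ht₀ : 0 < t) (ht : t * ‖w‖ ^ 2 < w.re) :
    τ * (1 - t * w) ∈ StolzAt τ (3 * ‖w‖ / w.re) := by
  have hw₀ : 0 < ‖w‖ := hw.trans_le (re_le_norm w)
  set n := ‖1 - t * w‖ with hn
  have hn_sq : n ^ 2 < 1 - t * w.re := by
    rw [hn, norm_one_sub_ofReal_mul_sq]; nlinarith
  have hn_lt : n < 1 := by nlinarith [norm_nonneg (1 - t * w), mul_pos ht₀ hw]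
  -- `(1 - n)(1 + n) = 1 - n² > t Re w` and `1 + n < 2`
  have hgap : t * w.re < 2 * (1 - n) := by nlinarith [norm_nonneg (1 - t * w)]
  have hdist : ‖τ - τ * (1 - t * w)‖ = t * ‖w‖ := by
    rw [show τ - τ * (1 - t * w) = τ * (t * w) by ring, norm_mul, norm_mul, hτ, norm_real,
      Real.norm_of_nonneg ht₀.le, one_mul]
  change ‖τ - τ * (1 - t * w)‖ < 3 * ‖w‖ / w.re * (1 - ‖τ * (1 - t * w)‖)
  rw [hdist, norm_mul, hτ, one_mul, ← hn, div_mul_eq_mul_div, lt_div_iff₀ hw]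
  nlinarith [mul_pos ht₀ hw₀]

theorem tendsto_mul_one_sub_ofReal_mul_nhdsWithin_stolzAt {τ w : ℂ} (hτ : ‖τ‖ = 1)
    (hw : 0 < w.re) :
    Tendsto (fun t : ℝ => τ * (1 - t * w)) (𝓝[>] 0) (𝓝[StolzAt τ (3 * ‖w‖ / w.re)] τ) := by
  have hw₀ : 0 < ‖w‖ := hw.trans_le (re_le_norm w)
  refine tendsto_nhdsWithin_iff.mpr ⟨?_, ?_⟩
  · have hcont : Continuous fun t : ℝ => τ * (1 - t * w) := by fun_prop
    exact (hcont.tendsto' 0 τ (by simp)).mono_left nhdsWithin_le_nhds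
  · have hsmall : Iio (w.re / ‖w‖ ^ 2) ∈ 𝓝[>] (0 : ℝ) :=
      mem_nhdsWithin_of_mem_nhds (Iio_mem_nhds (by positivity))
    filter_upwards [self_mem_nhdsWithin, hsmall] with t ht₀ ht
    exact mem_stolzAt_mul_one_sub_ofReal_mul hτ hw ht₀ ((lt_div_iff₀ (by positivity)).mp ht)

theorem re_mul_nonneg_of_angularTendsto {g : ℂ → ℂ} {τ k w : ℂ} (hτ : ‖τ‖ = 1)
    (hre : ∀ z ∈ ball (0 : ℂ) 1, 0 ≤ (g z).re)
    (hlim : AngularTendsto (fun z => g z / (1 - (starRingEnd ℂ) τ * z)) τ k) (hw : 0 < w.re) :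
    0 ≤ (k * w).re := by
  have hw₀ : w ≠ 0 := fun h => by simp [h] at hw
  set M := 3 * ‖w‖ / w.re
  have hM : 1 < M := by
    rw [one_lt_div hw]; linarith [re_le_norm w]
  have hden (t : ℝ) : 1 - (starRingEnd ℂ) τ * (τ * (1 - t * w)) = t * w := by
    rw [← mul_assoc, conj_mul', hτ]; push_cast; ring
  have hseg := tendsto_mul_one_sub_ofReal_mul_nhdsWithin_stolzAt hτ hw
  have hquot : Tendsto (fun t : ℝ => g (τ * (1 - t * w)) / t) (𝓝[>] 0) (𝓝 (k * w)) := by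
    refine (((hlim M hM).comp hseg).mul_const w).congr' ?_
    filter_upwards [self_mem_nhdsWithin] with t (ht : 0 < t)
    have : (t : ℂ) ≠ 0 := by exact_mod_cast ht.ne'
    simp only [Function.comp_apply, hden]
    field_simp
  refine ge_of_tendsto ((continuous_re.tendsto _).comp hquot) ?_
  filter_upwards [self_mem_nhdsWithin, (tendsto_nhdsWithin_iff.mp hseg).2] with t (ht : 0 < t) hmem
  simpa only [Function.comp_apply, div_ofReal_re] using
    div_nonneg (hre _ (stolzAt_subset_ball (by linarith) hmem)) ht.le

theorem im_eq_zero_and_re_nonneg_of_forall_re_mul_nonneg {k : ℂ}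
    (h : ∀ w : ℂ, 0 < w.re → 0 ≤ (k * w).re) : k.im = 0 ∧ 0 ≤ k.re := by
  refine ⟨?_, by simpa using h 1 one_pos⟩
  by_contra him
  set w : ℂ := 1 + ((k.re + 1) / k.im : ℝ) * I
  have hw : 0 < w.re := by simp [w]
  have hneg : (k * w).re = -1 := by
    simp only [w, mul_re, add_re, one_re, I_re, add_im, one_im, im_ofReal_mul, I_im, ofReal_re,
      ofReal_im]
    field_simp
    ring
  linarith [h w hw]

theorem angular_limit_nonneg_real_general
    (g : ℂ → ℂ) (τ : ℂ) (hτ : ‖τ‖ = 1)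
    (hre : ∀ z ∈ ball (0:ℂ) 1, 0 ≤ (g z).re)
    (k : ℂ)
    (hlim : AngularTendsto (fun z => g z / (1 - (starRingEnd ℂ) τ * z)) τ k) :
    k.im = 0 ∧ 0 ≤ k.re :=
  im_eq_zero_and_re_nonneg_of_forall_re_mul_nonneg fun _ hw =>
    re_mul_nonneg_of_angularTendsto hτ hre hlim hw

theorem angular_limit_nonneg_real
    (g : ℂ → ℂ) (τ : ℂ) (hτ : ‖τ‖ = 1)
    (hg : DifferentiableOn ℂ g (ball (0:ℂ) 1))
    (hre : ∀ z ∈ ball (0:ℂ) 1, 0 ≤ (g z).re)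
    (k : ℂ)
    (hlim : AngularTendsto (fun z => g z / (1 - (starRingEnd ℂ) τ * z)) τ k) :
    k.im = 0 ∧ 0 ≤ k.re :=
  angular_limit_nonneg_real_general g τ hτ hre k hlim
end

section
/- Let f be holomorphic on the open unit disk Δ and suppose f(z) = (z - τ)(1 - conj(τ)·z)·g(z) for some τ ∈ ∂Δ and some holomorphic g with Re g ≥ 0 on Δ. If f(z) = a(z-τ)³ + o(|z-τ|³) as z → τ non-tangentially for some a ∈ ℂ, then a·τ² is a nonnegative real number, and a = 0 if and only if f ≡ 0 on Δ. -/
/-!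
On a Stolz angle `1 - conj τ * z = conj τ * (τ - z)`, so the expansion of `f` says exactly that
`g z / (τ - z) → τ * a` non-tangentially. The segments `t ↦ τ * (1 - t * (1 + s * I))`, `t ↓ 0`,
approach `τ` inside Stolz angles, and along them `Re g ≥ 0` gives `0 ≤ Re (τ ^ 2 * a * (1 + s * I))`
for every real `s`, i.e. `τ ^ 2 * a ≥ 0`.

If `a = 0` then `g (τ * (1 - t)) = o(t)`. By the open mapping theorem `g` is either constant, and
then the constant is `0`, or `Re g > 0` on the disc, and then Harnack's inequality
`Re g (τ * (1 - t)) ≥ Re g 0 * t / (2 - t)` is incompatible with `g (τ * (1 - t)) = o(t)`.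
Conversely, if `f ≡ 0` the expansion reads `a * (z - τ) ^ 3 = o(|z - τ| ^ 3)`, so `a = 0`.
-/

open Complex Metric Filter Set Asymptotics Topology

open ComplexConjugate

section

variable {τ : ℂ}

lemma StolzAt_subset_ball {M : ℝ} (hM : 0 < M) : StolzAt τ M ⊆ ball 0 1 := by
  intro z hz
  have : 0 < M * (1 - ‖z‖) := (norm_nonneg _).trans_lt hz
  rw [mem_ball_zero_iff]
  linarith [pos_of_mul_pos_right this hM.le]

lemma ne_of_mem_StolzAt (hτ : ‖τ‖ = 1) {M : ℝ} {z : ℂ} (hz : z ∈ StolzAt τ M) : z ≠ τ := by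
  rintro rfl
  simp [StolzAt, hτ] at hz

lemma norm_one_sub_mul_le {w : ℂ} {t : ℝ} (ht₀ : 0 ≤ t) (ht : t * ‖w‖ ^ 2 ≤ w.re) :
    ‖1 - t * w‖ ≤ 1 - t * w.re / 2 := by
  have hsq : ‖1 - t * w‖ ^ 2 = 1 - 2 * t * w.re + t ^ 2 * ‖w‖ ^ 2 := by
    rw [Complex.sq_norm, Complex.sq_norm, Complex.normSq_apply, Complex.normSq_apply]
    simp only [sub_re, one_re, mul_re, ofReal_re, ofReal_im, zero_mul, sub_zero, sub_im, one_im,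
      mul_im, zero_sub, add_zero]
    ring
  have hre : w.re ≤ ‖w‖ := re_le_norm w
  have hle : t * w.re ≤ 1 := by nlinarith [norm_nonneg w]
  refine (pow_le_pow_iff_left₀ (norm_nonneg _) (by linarith) two_ne_zero).1 ?_
  rw [hsq]
  nlinarith [mul_le_mul_of_nonneg_left ht ht₀, sq_nonneg (t * w.re)]

lemma exists_tendsto_nhdsWithin_StolzAt (hτ : ‖τ‖ = 1) {w : ℂ} (hw : 0 < w.re) :
    ∃ M, 1 < M ∧ Tendsto (fun t : ℝ => τ * (1 - t * w)) (𝓝[>] 0) (𝓝[StolzAt τ M] τ) := by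
  have hw₀ : 0 < ‖w‖ := hw.trans_le (re_le_norm w)
  refine ⟨2 * ‖w‖ / w.re + 1, by linarith [div_pos (mul_pos two_pos hw₀) hw], ?_⟩
  refine tendsto_nhdsWithin_of_tendsto_nhds_of_eventually_within _ ?_ ?_
  · refine (Continuous.tendsto' (by fun_prop) 0 τ (by simp)).mono_left nhdsWithin_le_nhds
  · have hpos : 0 < w.re / ‖w‖ ^ 2 := by positivity
    filter_upwards [Ioo_mem_nhdsGT hpos] with t ⟨ht₀, ht⟩
    have hle := norm_one_sub_mul_le ht₀.le ((lt_div_iff₀ (by positivity)).1 ht).le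
    have hdist : ‖τ - τ * (1 - t * w)‖ = t * ‖w‖ := by
      rw [show τ - τ * (1 - t * w) = τ * (t * w) by ring, norm_mul, norm_mul, hτ, one_mul,
        norm_real, Real.norm_of_nonneg ht₀.le]
    show ‖τ - τ * (1 - t * w)‖ < _ * (1 - ‖τ * (1 - t * w)‖)
    rw [hdist, norm_mul, hτ, one_mul]
    calc t * ‖w‖ < (2 * ‖w‖ / w.re + 1) * (t * w.re / 2) := by
          field_simp; nlinarith
      _ ≤ _ := by gcongr; linarith

lemma tendsto_div_of_angularTendsto {g : ℂ → ℂ} {L w : ℂ} {M : ℝ} (hτ : ‖τ‖ = 1) (hM : 1 < M)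
    (hL : AngularTendsto (fun z => g z / (τ - z)) τ L)
    (hγ : Tendsto (fun t : ℝ => τ * (1 - t * w)) (𝓝[>] 0) (𝓝[StolzAt τ M] τ)) :
    Tendsto (fun t : ℝ => g (τ * (1 - t * w)) / t) (𝓝[>] 0) (𝓝 (L * (τ * w))) := by
  refine (((hL M hM).comp hγ).mul_const (τ * w)).congr' ?_
  filter_upwards [self_mem_nhdsWithin, (tendsto_nhdsWithin_iff.1 hγ).2] with t ht hγt
  have hτ₀ : τ ≠ 0 := norm_ne_zero_iff.1 (by rw [hτ]; exact one_ne_zero)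
  have hw : w ≠ 0 := by
    rintro rfl
    exact ne_of_mem_StolzAt hτ hγt (by simp)
  have ht₀ : (t : ℂ) ≠ 0 := ofReal_ne_zero.2 (ne_of_gt ht)
  simp only [Function.comp_apply, show τ - τ * (1 - t * w) = τ * w * t by ring]
  field_simp

lemma re_nonneg_of_angularTendsto {g : ℂ → ℂ} {L w : ℂ} (hτ : ‖τ‖ = 1) (hw : 0 < w.re)
    (hre : ∀ z ∈ ball (0 : ℂ) 1, 0 ≤ (g z).re)
    (hL : AngularTendsto (fun z => g z / (τ - z)) τ L) :
    0 ≤ (L * (τ * w)).re := by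
  obtain ⟨M, hM, hγ⟩ := exists_tendsto_nhdsWithin_StolzAt hτ hw
  refine ge_of_tendsto (continuous_re.tendsto _ |>.comp
    (tendsto_div_of_angularTendsto hτ hM hL hγ)) ?_
  filter_upwards [self_mem_nhdsWithin, (tendsto_nhdsWithin_iff.1 hγ).2] with t ht hγt
  rw [Function.comp_apply, div_ofReal_re]
  exact div_nonneg (hre _ (StolzAt_subset_ball (by linarith) hγt)) (le_of_lt ht)

lemma im_eq_zero_and_re_nonneg_of_forall {z : ℂ} (h : ∀ s : ℝ, 0 ≤ (z * (1 + s * I)).re) :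
    z.im = 0 ∧ 0 ≤ z.re := by
  have key : ∀ s : ℝ, s * z.im ≤ z.re := fun s => by
    have := h s
    simp only [mul_re, add_re, one_re, mul_re, ofReal_re, I_re, ofReal_im, I_im, add_im, one_im,
      mul_im] at this
    linarith
  refine ⟨?_, by simpa using key 0⟩
  by_contra him
  have := key ((z.re + 1) / z.im)
  rw [div_mul_cancel₀ _ him] at this
  linarith

lemma DifferentiableOn.eq_const_or_re_pos {g : ℂ → ℂ} {U : Set ℂ} (hU : IsOpen U)
    (hU' : IsPreconnected U) (hg : DifferentiableOn ℂ g U) (hre : ∀ z ∈ U, 0 ≤ (g z).re) :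
    (∃ c, ∀ z ∈ U, g z = c) ∨ ∀ z ∈ U, 0 < (g z).re := by
  refine (hg.analyticOnNhd hU |>.is_constant_or_isOpen hU').imp_right fun hopen z hz => ?_
  have hsub : g '' U ⊆ interior {w : ℂ | 0 ≤ w.re} :=
    interior_maximal (image_subset_iff.2 hre) (hopen U subset_rfl hU)
  rw [interior_setOfPred_le_re] at hsub
  exact hsub (mem_image_of_mem g hz)

lemma norm_sub_lt_norm_add_conj {w w₀ : ℂ} (hw : 0 < w.re) (hw₀ : 0 < w₀.re) :
    ‖w - w₀‖ < ‖w + conj w₀‖ := by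
  refine (pow_lt_pow_iff_left₀ (norm_nonneg _) (norm_nonneg _) two_ne_zero).1 ?_
  simp only [Complex.sq_norm, normSq_apply, sub_re, sub_im, add_re, add_im, conj_re, conj_im]
  nlinarith

lemma re_mul_one_sub_le_of_norm_sub_le {w w₀ : ℂ} {r : ℝ} (hr₀ : 0 ≤ r) (hr : r ≤ 1)
    (hw : 0 ≤ w.re + w₀.re) (h : ‖w - w₀‖ ≤ r * ‖w + conj w₀‖) :
    w₀.re * (1 - r) ≤ w.re * (1 + r) := by
  have hsq := pow_le_pow_left₀ (norm_nonneg _) h 2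
  simp only [mul_pow, Complex.sq_norm, normSq_apply, sub_re, sub_im, add_re, add_im, conj_re,
    conj_im] at hsq
  have hre : (w.re - w₀.re) ^ 2 ≤ (r * (w.re + w₀.re)) ^ 2 := by
    nlinarith [mul_nonneg (sub_nonneg.2 (pow_le_one₀ hr₀ hr : r ^ 2 ≤ 1))
      (sq_nonneg (w.im - w₀.im))]
  nlinarith [abs_le_of_sq_le_sq' hre (mul_nonneg hr₀ hw)]

/-- Harnack's inequality, from the Schwarz lemma applied to the Cayley transform
`(g - g 0) / (g + conj (g 0))`. -/
lemma re_mul_one_sub_norm_le {g : ℂ → ℂ} (hg : DifferentiableOn ℂ g (ball 0 1))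
    (hre : ∀ z ∈ ball (0 : ℂ) 1, 0 < (g z).re) {z : ℂ} (hz : z ∈ ball (0 : ℂ) 1) :
    (g 0).re * (1 - ‖z‖) ≤ (g z).re * (1 + ‖z‖) := by
  have h₀ : (0 : ℂ) ∈ ball (0 : ℂ) 1 := mem_ball_self one_pos
  have hlt : ∀ z ∈ ball (0 : ℂ) 1, ‖g z - g 0‖ < ‖g z + conj (g 0)‖ := fun z hz =>
    norm_sub_lt_norm_add_conj (hre z hz) (hre 0 h₀)
  have hden : ∀ z ∈ ball (0 : ℂ) 1, g z + conj (g 0) ≠ 0 := fun z hz =>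
    norm_pos_iff.1 ((norm_nonneg _).trans_lt (hlt z hz))
  have hmaps : MapsTo (fun z => (g z - g 0) / (g z + conj (g 0))) (ball 0 1) (closedBall 0 1) :=
    fun z hz => by
      rw [mem_closedBall_zero_iff, norm_div]
      exact div_le_one_of_le₀ (hlt z hz).le (norm_nonneg _)
  have hschwarz : ‖(g z - g 0) / (g z + conj (g 0))‖ ≤ ‖z‖ :=
    Complex.norm_le_norm_of_mapsTo_ball ((hg.sub_const _).div (hg.add_const _) hden) hmaps
      (by simp) (mem_ball_zero_iff.1 hz)
  rw [norm_div, div_le_iff₀ (norm_pos_iff.2 (hden z hz))] at hschwarz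
  exact re_mul_one_sub_le_of_norm_sub_le (norm_nonneg _) (mem_ball_zero_iff.1 hz).le
    (add_pos (hre z hz) (hre 0 h₀)).le hschwarz

lemma eqOn_zero_of_angularTendsto_zero {g : ℂ → ℂ} (hτ : ‖τ‖ = 1)
    (hg : DifferentiableOn ℂ g (ball 0 1)) (hre : ∀ z ∈ ball (0 : ℂ) 1, 0 ≤ (g z).re)
    (hL : AngularTendsto (fun z => g z / (τ - z)) τ 0) :
    ∀ z ∈ ball (0 : ℂ) 1, g z = 0 := by
  obtain ⟨M, hM, hγ⟩ := exists_tendsto_nhdsWithin_StolzAt hτ (w := 1) (by simp)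
  have hlim : Tendsto (fun t : ℝ => g (τ * (1 - t)) / t) (𝓝[>] 0) (𝓝 0) := by
    simpa using tendsto_div_of_angularTendsto hτ hM hL hγ
  have hnorm : ∀ t ∈ Ioo (0 : ℝ) 1, ‖τ * (1 - t)‖ = 1 - t := fun t ht => by
    rw [norm_mul, hτ, one_mul, ← ofReal_one, ← ofReal_sub, norm_real,
      Real.norm_of_nonneg (by linarith [ht.2])]
  have hball : ∀ t ∈ Ioo (0 : ℝ) 1, τ * (1 - t) ∈ ball (0 : ℂ) 1 := fun t ht => by
    rw [mem_ball_zero_iff, hnorm t ht]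
    linarith [ht.1]
  have hIoo : Ioo (0 : ℝ) 1 ∈ 𝓝[>] 0 := Ioo_mem_nhdsGT one_pos
  rcases hg.eq_const_or_re_pos isOpen_ball (convex_ball _ _).isPreconnected hre with
    ⟨c, hc⟩ | hpos
  · suffices hc₀ : c = 0 from fun z hz => (hc z hz).trans hc₀
    have hmul : Tendsto (fun t : ℝ => (t : ℂ) * (g (τ * (1 - t)) / t)) (𝓝[>] 0) (𝓝 0) := by
      simpa using ((continuous_ofReal.tendsto 0).mono_left nhdsWithin_le_nhds).mul hlim
    refine tendsto_nhds_unique (tendsto_const_nhds.congr' ?_) hmul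
    filter_upwards [hIoo] with t ht
    rw [mul_div_cancel₀ _ (ofReal_ne_zero.2 ht.1.ne'), hc _ (hball t ht)]
  · have hbound : ∀ t ∈ Ioo (0 : ℝ) 1, (g 0).re ≤ 2 * (g (τ * (1 - t)) / t).re := by
      intro t ht
      have hH := re_mul_one_sub_norm_le hg hpos (hball t ht)
      have hgz := hpos _ (hball t ht)
      rw [hnorm t ht] at hH
      rw [div_ofReal_re, mul_div_assoc', le_div_iff₀ ht.1]
      nlinarith [ht.1, ht.2]
    have hle : (g 0).re ≤ 2 * (0 : ℂ).re :=
      ge_of_tendsto (((continuous_re.tendsto _).comp hlim).const_mul 2)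
        (eventually_of_mem hIoo hbound)
    rw [zero_re, mul_zero] at hle
    exact absurd (hpos 0 (mem_ball_self one_pos)) hle.not_gt

lemma tendsto_div_cube_of_isLittleO {f : ℂ → ℂ} {a : ℂ} {l : Filter ℂ}
    (hexp : (fun z => f z - a * (z - τ) ^ 3) =o[l] (fun z => ‖z - τ‖ ^ 3)) :
    Tendsto (fun z => (f z - a * (z - τ) ^ 3) / (z - τ) ^ 3) l (𝓝 0) := by
  simp_rw [← norm_pow] at hexp
  exact (isLittleO_norm_right.1 hexp).tendsto_div_nhds_zero

lemma angularTendsto_div_of_isLittleO {f g : ℂ → ℂ} {a : ℂ} (hτ : ‖τ‖ = 1)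
    (hf : ∀ z ∈ ball (0 : ℂ) 1, f z = (z - τ) * (1 - conj τ * z) * g z)
    (hexp : ∀ M : ℝ, 1 < M →
      (fun z => f z - a * (z - τ) ^ 3) =o[𝓝[StolzAt τ M] τ] (fun z => ‖z - τ‖ ^ 3)) :
    AngularTendsto (fun z => g z / (τ - z)) τ (τ * a) := by
  intro M hM
  have hconj : conj τ * τ = 1 := by rw [conj_mul', hτ]; norm_num
  have h := ((tendsto_div_cube_of_isLittleO (hexp M hM)).add_const a).const_mul τ
  rw [zero_add] at h
  refine h.congr' ?_
  filter_upwards [self_mem_nhdsWithin] with z hz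
  have hzτ : z - τ ≠ 0 := sub_ne_zero.2 (ne_of_mem_StolzAt hτ hz)
  have hτz : τ - z ≠ 0 := sub_ne_zero.2 (ne_of_mem_StolzAt hτ hz).symm
  rw [hf z (StolzAt_subset_ball (by linarith) hz)]
  field_simp
  linear_combination (-(τ - z) * z * g z) * hconj

end

theorem rigidity_generator_cubic
    (f g : ℂ → ℂ) (τ a : ℂ) (hτ : ‖τ‖ = 1)
    (hg : DifferentiableOn ℂ g (ball (0:ℂ) 1))
    (hre : ∀ z ∈ ball (0:ℂ) 1, 0 ≤ (g z).re)
    (hf : ∀ z ∈ ball (0:ℂ) 1, f z = (z - τ) * (1 - (starRingEnd ℂ) τ * z) * g z)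
    (hexp : ∀ M : ℝ, 1 < M →
      (fun z => f z - a * (z - τ) ^ 3) =o[𝓝[StolzAt τ M] τ]
        (fun z => ‖z - τ‖ ^ 3)) :
    ((a * τ ^ 2).im = 0 ∧ 0 ≤ (a * τ ^ 2).re) ∧
      (a = 0 ↔ ∀ z ∈ ball (0:ℂ) 1, f z = 0) := by
  have hL := angularTendsto_div_of_isLittleO hτ hf hexp
  refine ⟨im_eq_zero_and_re_nonneg_of_forall fun s => ?_, fun ha z hz => ?_, fun hf₀ => ?_⟩
  · have h := re_nonneg_of_angularTendsto (w := 1 + s * I) hτ (by simp) hre hL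
    rwa [show τ * a * (τ * (1 + s * I)) = a * τ ^ 2 * (1 + s * I) by ring] at h
  · rw [ha, mul_zero] at hL
    rw [hf z hz, eqOn_zero_of_angularTendsto_zero hτ hg hre hL z hz, mul_zero]
  · obtain ⟨M, hM, hγ⟩ := exists_tendsto_nhdsWithin_StolzAt hτ (w := 1) (by simp)
    have := hγ.neBot
    have h := tendsto_div_cube_of_isLittleO (hexp M hM)
    refine neg_eq_zero.1 (tendsto_nhds_unique (tendsto_const_nhds.congr' ?_) h)
    filter_upwards [self_mem_nhdsWithin] with z hz
    rw [hf₀ z (StolzAt_subset_ball (by linarith) hz), zero_sub, neg_div,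
      mul_div_cancel_right₀ _ (pow_ne_zero 3 (sub_ne_zero.2 (ne_of_mem_StolzAt hτ hz)))]
end

section
/- Let f and g be generators of one-parameter continuous semigroups {F_t}_{t≥0} and {G_s}_{s≥0} of holomorphic self-maps of the unit disk Δ. If f = α·g for some α ∈ ℂ and the semigroups are well-defined (i.e., both f and αg are generators), and g has an interior null point τ ∈ Δ, then the semigroups commute: F_t ∘ G_s = G_s ∘ F_t for all s,t ≥ 0. -/
open Complex Metric Filter Set Asymptotics Topology

/-- `F` is a one-parameter continuous semigroup of holomorphic self-maps of the
open unit disk generated by `f` (via the Cauchy problem `∂F_t/∂t + f∘F_t = 0`). -/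
def IsSemigroupGeneratedBy (F : ℝ → ℂ → ℂ) (f : ℂ → ℂ) : Prop :=
  (∀ z ∈ ball (0:ℂ) 1, F 0 z = z) ∧
  (∀ t : ℝ, 0 ≤ t → MapsTo (F t) (ball (0:ℂ) 1) (ball (0:ℂ) 1)) ∧
  (∀ t : ℝ, 0 ≤ t → DifferentiableOn ℂ (F t) (ball (0:ℂ) 1)) ∧
  (∀ t s : ℝ, 0 ≤ t → 0 ≤ s → ∀ z ∈ ball (0:ℂ) 1, F (t + s) z = F t (F s z)) ∧
  (∀ z ∈ ball (0:ℂ) 1, ∀ t : ℝ, 0 ≤ t → HasDerivAt (fun s => F s z) (-(f (F t z))) t)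


/-! Differentiating `G_{s+r} = G_s ∘ G_r` at `r = 0⁺` gives `g ∘ G_s = G_s' · g`; since
`f = α · g`, the same identity holds for `f`, so `t ↦ G_s (F_t z)` solves the Cauchy problem
`u' = -f(u)` with initial value `G_s z`, as does `t ↦ F_t (G_s z)`. A holomorphic field is
locally Lipschitz, hence the two trajectories coincide. -/

theorem DifferentiableOn.locallyLipschitzOn {f : ℂ → ℂ} {U : Set ℂ}
    (hf : DifferentiableOn ℂ f U) (hU : IsOpen U) (hU' : Convex ℝ U) :
    LocallyLipschitzOn U f :=
  ((hf.contDiffOn (n := 1) hU).restrict_scalars ℝ).locallyLipschitzOn hU'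

theorem eqOn_Icc_of_hasDerivAt_of_locallyLipschitzOn {E : Type*} [NormedAddCommGroup E]
    [NormedSpace ℝ E] {U : Set E} {v : E → E} (hv : LocallyLipschitzOn U v)
    {u w : ℝ → E} {a b : ℝ}
    (hu : ∀ t ∈ Icc a b, HasDerivAt u (v (u t)) t) (huU : ∀ t ∈ Icc a b, u t ∈ U)
    (hw : ∀ t ∈ Icc a b, HasDerivAt w (v (w t)) t) (hwU : ∀ t ∈ Icc a b, w t ∈ U)
    (ha : u a = w a) : EqOn u w (Icc a b) := by
  have hu_cont : ContinuousOn u (Icc a b) := fun t ht => (hu t ht).continuousAt.continuousWithinAt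
  have hw_cont : ContinuousOn w (Icc a b) := fun t ht => (hw t ht).continuousAt.continuousWithinAt
  set K := u '' Icc a b ∪ w '' Icc a b
  have hK : IsCompact K :=
    (isCompact_Icc.image_of_continuousOn hu_cont).union
      (isCompact_Icc.image_of_continuousOn hw_cont)
  have hKU : K ⊆ U := union_subset (image_subset_iff.2 huU) (image_subset_iff.2 hwU)
  obtain ⟨C, hC⟩ := (hv.mono hKU).exists_lipschitzOnWith_of_compact hK
  exact ODE_solution_unique_of_mem_Icc_right (v := fun _ => v) (s := fun _ => K) (fun _ _ => hC)
    hu_cont (fun t ht => (hu t (Ico_subset_Icc_self ht)).hasDerivWithinAt)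
    (fun t ht => Or.inl (mem_image_of_mem u (Ico_subset_Icc_self ht)))
    hw_cont (fun t ht => (hw t (Ico_subset_Icc_self ht)).hasDerivWithinAt)
    (fun t ht => Or.inr (mem_image_of_mem w (Ico_subset_Icc_self ht))) ha

namespace IsSemigroupGeneratedBy

variable {F : ℝ → ℂ → ℂ} {f : ℂ → ℂ}

theorem mapsTo (hF : IsSemigroupGeneratedBy F f) {t : ℝ} (ht : 0 ≤ t) :
    MapsTo (F t) (ball (0:ℂ) 1) (ball (0:ℂ) 1) :=
  hF.2.1 t ht

theorem differentiableOn (hF : IsSemigroupGeneratedBy F f) {t : ℝ} (ht : 0 ≤ t) :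
    DifferentiableOn ℂ (F t) (ball (0:ℂ) 1) :=
  hF.2.2.1 t ht

theorem hasDerivAt_deriv (hF : IsSemigroupGeneratedBy F f) {t : ℝ} (ht : 0 ≤ t) {z : ℂ}
    (hz : z ∈ ball (0:ℂ) 1) : HasDerivAt (F t) (deriv (F t) z) z :=
  ((hF.differentiableOn ht z hz).differentiableAt (isOpen_ball.mem_nhds hz)).hasDerivAt

theorem generator_comp_eq_deriv_mul (hF : IsSemigroupGeneratedBy F f) {t : ℝ} (ht : 0 ≤ t)
    {z : ℂ} (hz : z ∈ ball (0:ℂ) 1) : f (F t z) = deriv (F t) z * f z := by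
  have h_outer := hF.hasDerivAt_deriv ht hz
  obtain ⟨hF0, -, -, hFadd, hFder⟩ := hF
  have h_left : HasDerivAt (fun r => F (t + r) z) (-f (F t z)) 0 :=
    HasDerivAt.comp_const_add t 0 (by simpa using hFder z hz t ht)
  have h_right : HasDerivAt (fun r => F t (F r z)) (deriv (F t) z * -f z) 0 := by
    have h_inner := hFder z hz 0 le_rfl
    rw [hF0 z hz] at h_inner
    exact HasDerivAt.comp (h := fun r => F r z) 0 (by rwa [hF0 z hz]) h_inner
  have h_eq := (uniqueDiffOn_Ici (0:ℝ) 0 self_mem_Ici).eq_deriv _ h_left.hasDerivWithinAt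
    (h_right.hasDerivWithinAt.congr (fun r hr => hFadd t r ht hr z hz)
      (hFadd t 0 ht le_rfl z hz))
  linear_combination -h_eq

theorem apply_comm_of_semiconj (hF : IsSemigroupGeneratedBy F f)
    (hf : DifferentiableOn ℂ f (ball (0:ℂ) 1)) {φ : ℂ → ℂ}
    (hφ : DifferentiableOn ℂ φ (ball (0:ℂ) 1))
    (hφ_maps : MapsTo φ (ball (0:ℂ) 1) (ball (0:ℂ) 1))
    (hfφ : ∀ w ∈ ball (0:ℂ) 1, f (φ w) = deriv φ w * f w)
    {t : ℝ} (ht : 0 ≤ t) {z : ℂ} (hz : z ∈ ball (0:ℂ) 1) : F t (φ z) = φ (F t z) := by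
  obtain ⟨hF0, hFmaps, -, -, hFder⟩ := hF
  have hφz := hφ_maps hz
  have h_image (r : ℝ) (hr : 0 ≤ r) :
      HasDerivAt (fun r' => φ (F r' z)) (-f (φ (F r z))) r := by
    have hFrz := hFmaps r hr hz
    have h_outer : HasDerivAt φ (deriv φ (F r z)) (F r z) :=
      ((hφ _ hFrz).differentiableAt (isOpen_ball.mem_nhds hFrz)).hasDerivAt
    rw [hfφ _ hFrz, ← mul_neg]
    exact h_outer.comp r (hFder z hz r hr)
  exact eqOn_Icc_of_hasDerivAt_of_locallyLipschitzOn (v := fun x => -f x)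
    (hf.neg.locallyLipschitzOn isOpen_ball (convex_ball 0 1))
    (fun r hr => hFder _ hφz r hr.1) (fun r hr => hFmaps r hr.1 hφz)
    (fun r hr => h_image r hr.1) (fun r hr => hφ_maps (hFmaps r hr.1 hz))
    (by simp only [hF0 _ hz, hF0 _ hφz]) ⟨ht, le_rfl⟩

end IsSemigroupGeneratedBy

theorem proportional_generators_interior_null_point_commute_general
    (f g : ℂ → ℂ) (α : ℂ) (F G : ℝ → ℂ → ℂ)
    (hf : DifferentiableOn ℂ f (ball (0:ℂ) 1))
    (hfg : ∀ z ∈ ball (0:ℂ) 1, f z = α * g z)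
    (hF : IsSemigroupGeneratedBy F f)
    (hG : IsSemigroupGeneratedBy G g) :
    ∀ t s : ℝ, 0 ≤ t → 0 ≤ s → ∀ z ∈ ball (0:ℂ) 1, F t (G s z) = G s (F t z) := by
  intro t s ht hs z hz
  have hf_semiconj : ∀ w ∈ ball (0:ℂ) 1, f (G s w) = deriv (G s) w * f w := fun w hw => by
    rw [hfg _ (hG.mapsTo hs hw), hfg w hw, hG.generator_comp_eq_deriv_mul hs hw]
    ring
  exact hF.apply_comm_of_semiconj hf (hG.differentiableOn hs) (hG.mapsTo hs) hf_semiconj ht hz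

theorem proportional_generators_interior_null_point_commute
    (f g : ℂ → ℂ) (α : ℂ) (F G : ℝ → ℂ → ℂ) (τ : ℂ)
    (hf : DifferentiableOn ℂ f (ball (0:ℂ) 1))
    (hg : DifferentiableOn ℂ g (ball (0:ℂ) 1))
    (hfg : ∀ z ∈ ball (0:ℂ) 1, f z = α * g z)
    (hF : IsSemigroupGeneratedBy F f)
    (hG : IsSemigroupGeneratedBy G g)
    (hτ : τ ∈ ball (0:ℂ) 1) (hgτ : g τ = 0) :
    ∀ t s : ℝ, 0 ≤ t → 0 ≤ s → ∀ z ∈ ball (0:ℂ) 1, F t (G s z) = G s (F t z) :=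
  proportional_generators_interior_null_point_commute_general f g α F G hf hfg hF hG
end
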